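/- Suppose the monic polynomial M^k + B_1(z) M^{k-1} + \cdots + B_k(z) over the field of meromorphic functions on \mathbb{C} factors as P \cdot Q with P, Q monic of degrees q and k - q (0 < q < k), and that on some domain U the roots of the full polynomial are holomorphic functions F_1, \ldots, F_k whose derivatives F_j' = w_j are the k distinct roots on U of an irreducible polynomial W^k + A_1(z) W^{k-1} + \cdots + A_k(z) with meromorphic coefficients. Then the derivatives of the roots of P on U are roots of a monic polynomial of degree q < k with meromorphic coefficients dividing W^k + A_1 W^{k-1} + \cdots + A_k, contradicting irreducibility. Hence M^k + B_1 M^{k-1} + \cdots + B_k is irreducible. -/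

import Mathlib

/-!
Near a point `z₀ ∈ U`, the roots of a monic factor `P` of the `B`-polynomial are, on a punctured
neighbourhood of `z₀`, a fixed set `{F t | t ∈ T}` of the `F j`: there are finitely many choices
of `T`, and the coefficients of `P` are meromorphic, so the isolated-zero principle applies.
Differentiating `P(z, F t z) = 0` gives `P'(F t) w t + Ṗ(F t) = 0`, where the coefficients of
`Ṗ` are the `z`-derivatives of those of `P`; hence
`∏ t ∈ T, (x - w t) = Res(P, x P' + Ṗ) / Res(P, P')` is a meromorphic function of `z` for
every `x`. Lagrange interpolation in `x` turns this into a monic polynomial of degree `#T` with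
meromorphic coefficients. Together with the same construction for the complement of `T` it
factors the `A`-polynomial on an open set, hence, by the identity theorem, away from a discrete
set.
-/

open Complex Finset Set

/-- The monic polynomial `M^k + B₁(z)M^{k-1} + ⋯ + B_k(z)` with meromorphic
coefficients factors (over the field of meromorphic functions on `ℂ`) if it is a
product of two monic polynomials of positive degree with meromorphic coefficients,
the identity holding away from a discrete exceptional set. -/
def AlgFactorable (k : ℕ) (A : Fin k → ℂ → ℂ) : Prop :=
  ∃ q : ℕ, 0 < q ∧ q < k ∧
    ∃ (a : Fin q → ℂ → ℂ) (b : Fin (k - q) → ℂ → ℂ),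
      (∀ j, MeromorphicOn (a j) Set.univ) ∧ (∀ j, MeromorphicOn (b j) Set.univ) ∧
      ∀ᶠ z in Filter.codiscrete ℂ, ∀ w : ℂ,
        w ^ k + ∑ j : Fin k, A j z * w ^ (k - 1 - (j : ℕ)) =
          (w ^ q + ∑ j : Fin q, a j z * w ^ (q - 1 - (j : ℕ))) *
          (w ^ (k - q) + ∑ j : Fin (k - q), b j z * w ^ (k - q - 1 - (j : ℕ)))

open Filter Topology Polynomial

namespace Polynomial

section monicOfCoeffs

variable {R : Type*} [CommRing R] {q : ℕ}

noncomputable def monicOfCoeffs (a : Fin q → R) : R[X] :=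
  X ^ q + ∑ j, C (a j) * X ^ (q - 1 - (j : ℕ))

theorem eval_monicOfCoeffs (a : Fin q → R) (x : R) :
    (monicOfCoeffs a).eval x = x ^ q + ∑ j, a j * x ^ (q - 1 - (j : ℕ)) := by
  simp [monicOfCoeffs, eval_finsetSum]

theorem degree_sum_C_mul_X_pow_sub_lt [Nontrivial R] (a : Fin q → R) :
    (∑ j, C (a j) * X ^ (q - 1 - (j : ℕ))).degree < (q : WithBot ℕ) := by
  refine (degree_sum_le _ _).trans_lt
    ((Finset.sup_lt_iff (WithBot.bot_lt_coe q)).2 fun j _ => ?_)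
  exact (degree_C_mul_X_pow_le _ _).trans_lt (Nat.cast_lt.2 (by omega))

theorem monic_monicOfCoeffs [Nontrivial R] (a : Fin q → R) : (monicOfCoeffs a).Monic :=
  monic_X_pow_add (degree_sum_C_mul_X_pow_sub_lt a)

theorem natDegree_monicOfCoeffs [Nontrivial R] (a : Fin q → R) :
    (monicOfCoeffs a).natDegree = q := by
  rw [monicOfCoeffs, natDegree_add_eq_left_of_degree_lt, natDegree_X_pow]
  simpa using degree_sum_C_mul_X_pow_sub_lt a

theorem Monic.monicOfCoeffs_coeff {p : R[X]} (hp : p.Monic) (hq : p.natDegree = q) :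
    monicOfCoeffs (fun j : Fin q => p.coeff (q - 1 - j)) = p := by
  conv_rhs => rw [hp.as_sum, hq]
  rw [monicOfCoeffs,
    Fin.sum_univ_eq_sum_range (fun j => C (p.coeff (q - 1 - j)) * X ^ (q - 1 - j)),
    sum_range_reflect (fun i => C (p.coeff i) * X ^ i)]

theorem monicOfCoeffs_eq_prod_X_sub_C [IsDomain R] [Infinite R] {ι : Type*} [Fintype ι]
    {a : Fin q → R} {c : ι → R}
    (h : ∀ x, x ^ q + ∑ j, a j * x ^ (q - 1 - (j : ℕ)) = ∏ i, (x - c i)) :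
    monicOfCoeffs a = ∏ i, (X - C (c i)) :=
  Polynomial.funext fun x => by simp [eval_monicOfCoeffs, h, eval_prod]

end monicOfCoeffs

theorem eventually_eq_of_forall_coeff {α R : Type*} [Semiring R] {l : Filter α}
    {P Q : α → R[X]} {N : ℕ} (hP : ∀ z, (P z).natDegree ≤ N) (hQ : ∀ z, (Q z).natDegree ≤ N)
    (h : ∀ n ≤ N, ∀ᶠ z in l, (P z).coeff n = (Q z).coeff n) : ∀ᶠ z in l, P z = Q z := by
  have : ∀ᶠ z in l, ∀ n ∈ range (N + 1), (P z).coeff n = (Q z).coeff n :=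
    (eventually_all_finset _).2 fun n hn => h n (Nat.lt_succ_iff.1 (Finset.mem_range.1 hn))
  filter_upwards [this] with z hz
  exact (ext_iff_natDegree_le (hP z) (hQ z)).2 fun n hn =>
    hz n (Finset.mem_range.2 (Nat.lt_succ_of_le hn))

theorem resultant_prod_X_sub_C_left {R ι : Type*} [CommRing R] [Nontrivial R] (s : Finset ι)
    (c : ι → R) {g : R[X]} {n : ℕ} (hg : g.natDegree ≤ n) :
    (∏ i ∈ s, (X - C (c i))).resultant g #s n = ∏ i ∈ s, g.eval (c i) := by
  have := resultant_prod_left s (fun i => X - C (c i)) g n (by simp) hg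
  simp only [natDegree_finsetProd_X_sub_C_eq_card, natDegree_X_sub_C] at this
  rw [this]
  exact prod_congr rfl fun i _ => resultant_X_sub_C_left g n (c i) hg

section Field

variable {K ι : Type*} [Field K] (s : Finset ι) {c : ι → K}

theorem resultant_prod_X_sub_C_derivative_ne_zero (hc : Set.InjOn c s) :
    (∏ i ∈ s, (X - C (c i))).resultant (∏ i ∈ s, (X - C (c i))).derivative #s #s ≠ 0 := by
  have hsep : (∏ i ∈ s, (X - C (c i))).Separable :=
    separable_prod_X_sub_C_iff'.2 fun i hi j hj h => hc hi hj h
  rw [resultant_prod_X_sub_C_left s c ((natDegree_derivative_le _).trans (by simp))]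
  refine prod_ne_zero_iff.2 fun i hi => hsep.eval₂_derivative_ne_zero (RingHom.id K) ?_
  show eval (c i) _ = 0
  rw [eval_prod]
  exact prod_eq_zero hi (by simp)

theorem resultant_prod_X_sub_C_C_mul_derivative_add {g : K[X]} (hg : g.natDegree ≤ #s)
    {w : ι → K}
    (hw : ∀ i ∈ s, (∏ j ∈ s, (X - C (c j))).derivative.eval (c i) * w i + g.eval (c i) = 0)
    (x : K) :
    (∏ i ∈ s, (X - C (c i))).resultant
        (C x * (∏ i ∈ s, (X - C (c i))).derivative + g) #s #s =
      (∏ i ∈ s, (X - C (c i))).resultant (∏ i ∈ s, (X - C (c i))).derivative #s #s *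
        ∏ i ∈ s, (x - w i) := by
  have hder : (∏ i ∈ s, (X - C (c i))).derivative.natDegree ≤ #s :=
    (natDegree_derivative_le _).trans (by simp)
  rw [resultant_prod_X_sub_C_left s c hder, resultant_prod_X_sub_C_left s c
    (natDegree_add_le_of_degree_le (natDegree_C_mul_le _ _ |>.trans hder) hg),
    ← prod_mul_distrib]
  refine prod_congr rfl fun i hi => ?_
  simp only [eval_add, eval_mul, eval_C]
  linear_combination hw i hi

theorem exists_subset_eq_prod_X_sub_C_of_dvd [DecidableEq ι] {p : K[X]} (hp : p.Monic)
    (h : p ∣ ∏ i ∈ s, (X - C (c i))) : ∃ T ⊆ s, p = ∏ i ∈ T, (X - C (c i)) := by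
  induction s using Finset.induction generalizing p with
  | empty => exact ⟨∅, subset_rfl, by simpa using hp.eq_one_of_isUnit (isUnit_of_dvd_one h)⟩
  | insert a s ha ih =>
    rw [prod_insert ha] at h
    by_cases hap : X - C (c a) ∣ p
    · obtain ⟨p', rfl⟩ := hap
      obtain ⟨T, hTs, hT⟩ := ih ((monic_X_sub_C _).of_mul_monic_left hp)
        ((mul_dvd_mul_iff_left (X_sub_C_ne_zero _)).1 h)
      refine ⟨insert a T, insert_subset_insert a hTs, ?_⟩
      rw [prod_insert fun haT => ha (hTs haT), hT]
    · obtain ⟨T, hTs, hT⟩ := ih hp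
        (((irreducible_X_sub_C _).coprime_iff_not_dvd.2 hap).symm.dvd_of_dvd_mul_left h)
      exact ⟨T, hTs.trans (subset_insert a s), hT⟩

end Field

end Polynomial

theorem nhdsNE_le_codiscrete {X : Type*} [TopologicalSpace X] (x : X) :
    𝓝[≠] x ≤ codiscrete X :=
  fun S hS => compl_compl S ▸ disjoint_principal_right.1 (mem_codiscrete.1 hS x)

theorem Filter.Eventually.exists_isOpen_nonempty_of_nhdsNE {X : Type*} [TopologicalSpace X]
    [T1Space X] {x : X} [(𝓝[≠] x).NeBot] {p : X → Prop} (h : ∀ᶠ z in 𝓝[≠] x, p z) :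
    ∃ Ω : Set X, IsOpen Ω ∧ Ω.Nonempty ∧ ∀ z ∈ Ω, p z := by
  obtain ⟨u, hu, hxu, hsub⟩ := mem_nhdsWithin.1 h
  obtain ⟨y, hyx, hyu⟩ := nonempty_of_mem (inter_mem_nhdsWithin {x}ᶜ (hu.mem_nhds hxu))
  exact ⟨u ∩ {x}ᶜ, hu.inter isOpen_compl_singleton, ⟨y, hyu, hyx⟩, hsub⟩

theorem Meromorphic.eventuallyEq_codiscrete {𝕜 E : Type*} [RCLike 𝕜] [NormedAddCommGroup E]
    [NormedSpace 𝕜 E] {f g : 𝕜 → E} (hf : Meromorphic f) (hg : Meromorphic g) {z₀ : 𝕜}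
    (h : f =ᶠ[𝓝[≠] z₀] g) : f =ᶠ[codiscrete 𝕜] g := by
  have htop : ∀ x, meromorphicOrderAt (f - g) x = ⊤ := by
    by_contra! hx
    refine ((hf.sub hg).exists_meromorphicOrderAt_ne_top_iff_forall.1 hx z₀) ?_
    exact meromorphicOrderAt_eq_top_iff.2 (h.mono fun z hz => by simp [hz])
  refine mem_codiscrete.2 fun x => disjoint_principal_right.2 ?_
  filter_upwards [meromorphicOrderAt_eq_top_iff.1 (htop x)] with z hz
  simpa [sub_eq_zero] using hz

theorem Meromorphic.det {𝕜 n : Type*} [NontriviallyNormedField 𝕜] [Fintype n] [DecidableEq n]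
    {M : 𝕜 → Matrix n n 𝕜} (hM : ∀ i j, Meromorphic fun z => M z i j) :
    Meromorphic fun z => (M z).det := by
  simp only [Matrix.det_apply, Units.smul_def, zsmul_eq_mul]
  exact Meromorphic.fun_sum fun σ _ =>
    (Meromorphic.const _).fun_mul (Meromorphic.fun_prod fun i _ => hM _ _)

def MeromorphicCoeffs (P : ℂ → ℂ[X]) : Prop :=
  ∀ n, Meromorphic fun z => (P z).coeff n

namespace MeromorphicCoeffs

variable {P Q : ℂ → ℂ[X]}

theorem add (hP : MeromorphicCoeffs P) (hQ : MeromorphicCoeffs Q) :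
    MeromorphicCoeffs fun z => P z + Q z := fun n => by
  simpa only [coeff_add] using (hP n).fun_add (hQ n)

theorem mul (hP : MeromorphicCoeffs P) (hQ : MeromorphicCoeffs Q) :
    MeromorphicCoeffs fun z => P z * Q z := fun n => by
  simp only [coeff_mul]
  exact Meromorphic.fun_sum fun x _ => (hP x.1).fun_mul (hQ x.2)

theorem C_mul (hP : MeromorphicCoeffs P) (x : ℂ) : MeromorphicCoeffs fun z => C x * P z :=
  fun n => by simpa only [coeff_C_mul] using (Meromorphic.const x).fun_mul (hP n)

theorem derivative (hP : MeromorphicCoeffs P) :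
    MeromorphicCoeffs fun z => derivative (P z) :=
  fun n => by simpa only [coeff_derivative] using (hP (n + 1)).fun_mul (Meromorphic.const _)

theorem resultant (hP : MeromorphicCoeffs P) (hQ : MeromorphicCoeffs Q) (m n : ℕ) :
    Meromorphic fun z => (P z).resultant (Q z) m n := by
  refine Meromorphic.det fun i j => ?_
  induction j using Fin.addCases <;>
    simp only [sylvester, Matrix.of_apply, Fin.addCases_left, Fin.addCases_right] <;>
    split_ifs
  exacts [hQ _, Meromorphic.const 0, hP _, Meromorphic.const 0]

theorem eventuallyEq_codiscrete (hP : MeromorphicCoeffs P) (hQ : MeromorphicCoeffs Q) {N : ℕ}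
    (hPN : ∀ z, (P z).natDegree ≤ N) (hQN : ∀ z, (Q z).natDegree ≤ N) {Ω : Set ℂ}
    (hΩ : IsOpen Ω) (hΩne : Ω.Nonempty) (h : ∀ z ∈ Ω, P z = Q z) :
    P =ᶠ[codiscrete ℂ] Q := by
  obtain ⟨z₀, hz₀⟩ := hΩne
  have hPQ : ∀ᶠ z in 𝓝[≠] z₀, P z = Q z :=
    Eventually.mono (nhdsWithin_le_nhds (hΩ.mem_nhds hz₀)) h
  exact eventually_eq_of_forall_coeff hPN hQN fun n _ =>
    (hP n).eventuallyEq_codiscrete (hQ n) (hPQ.mono fun z hz => by simp only [hz])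

theorem exists_coeff_eq_deriv (hP : MeromorphicCoeffs P) {N : ℕ}
    (hPN : ∀ z, (P z).natDegree ≤ N) :
    ∃ D : ℂ → ℂ[X], MeromorphicCoeffs D ∧ (∀ z, (D z).natDegree ≤ N) ∧
      ∀ z n, (D z).coeff n = deriv (fun y => (P y).coeff n) z := by
  refine ⟨fun z => ∑ n ∈ Finset.range (N + 1), C (deriv (fun y => (P y).coeff n) z) * X ^ n,
    fun n => ?_, fun z => ?_, fun z n => ?_⟩
  · simp only [finsetSum_coeff, coeff_C_mul_X_pow]
    refine Meromorphic.fun_sum fun m _ => ?_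
    split_ifs
    exacts [(hP m).deriv, Meromorphic.const 0]
  · exact natDegree_sum_le_of_forall_le _ _ fun n hn =>
      (natDegree_C_mul_X_pow_le _ _).trans (Nat.lt_succ_iff.1 (Finset.mem_range.1 hn))
  · simp only [finsetSum_coeff, coeff_C_mul_X_pow, sum_ite_eq, Finset.mem_range]
    split_ifs with hn
    · rfl
    · have : (fun y => (P y).coeff n) = fun _ => 0 :=
        funext fun y => coeff_eq_zero_of_natDegree_lt ((hPN y).trans_lt (by omega))
      rw [this, deriv_const]

theorem _root_.meromorphicCoeffs_monicOfCoeffs {q : ℕ} {a : Fin q → ℂ → ℂ}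
    (ha : ∀ j, Meromorphic (a j)) : MeromorphicCoeffs fun z => monicOfCoeffs (a · z) :=
  fun n => by
    simp only [monicOfCoeffs, coeff_add, coeff_X_pow, finsetSum_coeff, coeff_C_mul_X_pow]
    refine (Meromorphic.const _).fun_add (Meromorphic.fun_sum fun j _ => ?_)
    split_ifs
    exacts [ha j, Meromorphic.const 0]

theorem exists_monic_eqOn (hP : MeromorphicCoeffs P) {Ω : Set ℂ} {q : ℕ}
    (hPΩ : ∀ z ∈ Ω, (P z).Monic ∧ (P z).natDegree = q) :
    ∃ P' : ℂ → ℂ[X], MeromorphicCoeffs P' ∧ (∀ z, (P' z).Monic ∧ (P' z).natDegree = q) ∧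
      ∀ z ∈ Ω, P' z = P z :=
  ⟨fun z => monicOfCoeffs fun j : Fin q => (P z).coeff (q - 1 - j),
    meromorphicCoeffs_monicOfCoeffs fun _ => hP _,
    fun _ => ⟨monic_monicOfCoeffs _, natDegree_monicOfCoeffs _⟩,
    fun z hz => (hPΩ z hz).1.monicOfCoeffs_coeff (hPΩ z hz).2⟩

end MeromorphicCoeffs

theorem algFactorable_iff {k : ℕ} {A : Fin k → ℂ → ℂ} :
    AlgFactorable k A ↔ ∃ q, 0 < q ∧ q < k ∧ ∃ P Q : ℂ → ℂ[X],
      MeromorphicCoeffs P ∧ MeromorphicCoeffs Q ∧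
      (∀ z, (P z).Monic ∧ (P z).natDegree = q) ∧
      (∀ z, (Q z).Monic ∧ (Q z).natDegree = k - q) ∧
      ∀ᶠ z in codiscrete ℂ, monicOfCoeffs (A · z) = P z * Q z := by
  constructor
  · rintro ⟨q, hq, hqk, a, b, ha, hb, hE⟩
    refine ⟨q, hq, hqk, fun z => monicOfCoeffs (a · z), fun z => monicOfCoeffs (b · z),
      meromorphicCoeffs_monicOfCoeffs fun j => meromorphicOn_univ.1 (ha j),
      meromorphicCoeffs_monicOfCoeffs fun j => meromorphicOn_univ.1 (hb j),
      fun z => ⟨monic_monicOfCoeffs _, natDegree_monicOfCoeffs _⟩,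
      fun z => ⟨monic_monicOfCoeffs _, natDegree_monicOfCoeffs _⟩, ?_⟩
    filter_upwards [hE] with z hz
    exact Polynomial.funext fun x => by simp only [eval_mul, eval_monicOfCoeffs, hz x]
  · rintro ⟨q, hq, hqk, P, Q, hP, hQ, hPm, hQm, hE⟩
    refine ⟨q, hq, hqk, fun j z => (P z).coeff (q - 1 - j),
      fun j z => (Q z).coeff (k - q - 1 - j),
      fun j => meromorphicOn_univ.2 (hP _), fun j => meromorphicOn_univ.2 (hQ _), ?_⟩
    filter_upwards [hE] with z hz x
    rw [← eval_monicOfCoeffs, ← eval_monicOfCoeffs, ← eval_monicOfCoeffs, hz,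
      (hPm z).1.monicOfCoeffs_coeff (hPm z).2, (hQm z).1.monicOfCoeffs_coeff (hQm z).2, eval_mul]

theorem eventually_eq_of_frequently_eq_of_meromorphicAt {P Q : ℂ → ℂ[X]} {z₀ : ℂ}
    (hP : ∀ n, MeromorphicAt (fun z => (P z).coeff n) z₀)
    (hQ : ∀ n, MeromorphicAt (fun z => (Q z).coeff n) z₀) {N : ℕ}
    (hPN : ∀ z, (P z).natDegree ≤ N) (hQN : ∀ z, (Q z).natDegree ≤ N)
    (h : ∃ᶠ z in 𝓝[≠] z₀, P z = Q z) : ∀ᶠ z in 𝓝[≠] z₀, P z = Q z :=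
  eventually_eq_of_forall_coeff hPN hQN fun n _ =>
    ((hP n).frequently_eq_iff_eventuallyEq (hQ n)).1 (h.mono fun z hz => by rw [hz])

theorem analyticAt_coeff_prod_X_sub_C {ι : Type*} (s : Finset ι) {c : ι → ℂ → ℂ} {z : ℂ}
    (hc : ∀ i ∈ s, AnalyticAt ℂ (c i) z) (n : ℕ) :
    AnalyticAt ℂ (fun y => (∏ i ∈ s, (X - C (c i y))).coeff n) z := by
  by_cases hn : n ≤ #s
  · simp_rw [sub_eq_add_neg, ← map_neg C, Finset.prod_X_add_C_coeff s _ hn]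
    exact Finset.analyticAt_fun_sum _ fun t ht =>
      Finset.analyticAt_fun_prod _ fun i hi => (hc i ((mem_powersetCard.1 ht).1 hi)).neg
  · have hzero : ∀ y, (∏ i ∈ s, (X - C (c i y))).coeff n = 0 := fun y =>
      coeff_eq_zero_of_natDegree_lt (by rw [natDegree_finsetProd_X_sub_C_eq_card]; omega)
    simp_rw [hzero]
    exact analyticAt_const

theorem hasDerivAt_eval_of_hasDerivAt_coeff {P : ℂ → ℂ[X]} {D : ℂ[X]} {N : ℕ} {z f' : ℂ}
    {f : ℂ → ℂ} (hPN : ∀ y, (P y).natDegree ≤ N) (hDN : D.natDegree ≤ N)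
    (hP : ∀ n, HasDerivAt (fun y => (P y).coeff n) (D.coeff n) z) (hf : HasDerivAt f f' z) :
    HasDerivAt (fun y => (P y).eval (f y))
      ((P z).derivative.eval (f z) * f' + D.eval (f z)) z := by
  have hsum : ∀ y, (P y).eval (f y) = ∑ n ∈ range (N + 1), (P y).coeff n * f y ^ n :=
    fun y => eval_eq_sum_range' (Nat.lt_succ_of_le (hPN y)) _
  simp_rw [hsum]
  refine (HasDerivAt.fun_sum fun n _ => (hP n).mul (hf.pow n)).congr_deriv ?_
  rw [derivative_eval, sum_over_range' _ (fun n => by simp) _ (Nat.lt_succ_of_le (hPN z)),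
    eval_eq_sum_range' (Nat.lt_succ_of_le hDN), sum_mul, ← sum_add_distrib]
  exact sum_congr rfl fun n _ => by simp only [Pi.pow_apply]; ring

theorem eval_derivative_mul_add_eval_eq_zero {P : ℂ → ℂ[X]} {D : ℂ[X]} {N : ℕ} {z f' : ℂ}
    {f : ℂ → ℂ} (hPN : ∀ y, (P y).natDegree ≤ N) (hDN : D.natDegree ≤ N)
    (hP : ∀ n, HasDerivAt (fun y => (P y).coeff n) (D.coeff n) z) (hf : HasDerivAt f f' z)
    (hroot : ∀ᶠ y in 𝓝 z, (P y).eval (f y) = 0) :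
    (P z).derivative.eval (f z) * f' + D.eval (f z) = 0 :=
  (hasDerivAt_eval_of_hasDerivAt_coeff hPN hDN hP hf).unique
    ((hasDerivAt_const z 0).congr_of_eventuallyEq hroot)

theorem exists_meromorphicCoeffs_eqOn_of_eval {Ω : Set ℂ} {P : ℂ → ℂ[X]} {N : ℕ}
    (hN : ∀ z ∈ Ω, (P z).natDegree ≤ N)
    (hP : ∀ x, ∃ f : ℂ → ℂ, Meromorphic f ∧ ∀ z ∈ Ω, (P z).eval x = f z) :
    ∃ P' : ℂ → ℂ[X], MeromorphicCoeffs P' ∧ ∀ z ∈ Ω, P' z = P z := by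
  choose f hf hfP using hP
  have hinj : Set.InjOn (fun i : ℕ => (i : ℂ)) (Finset.range (N + 1)) :=
    fun _ _ _ _ h => Nat.cast_injective h
  refine ⟨fun z => Lagrange.interpolate (range (N + 1)) (fun i : ℕ => (i : ℂ)) (f · z),
    fun n => ?_, fun z hz => ?_⟩
  · simp only [Lagrange.interpolate_apply, finsetSum_coeff, coeff_C_mul]
    exact Meromorphic.fun_sum fun i _ => (hf _).fun_mul (Meromorphic.const _)
  · refine (Lagrange.eq_interpolate_of_eval_eq _ hinj ?_ fun i _ => hfP _ z hz).symm
    rw [card_range]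
    exact degree_le_natDegree.trans_lt (Nat.cast_lt.2 (Nat.lt_succ_of_le (hN z hz)))

theorem exists_meromorphicCoeffs_eqOn_prod_X_sub_C_of_hasDerivAt {ι : Type*} (T : Finset ι)
    {P : ℂ → ℂ[X]} (hP : MeromorphicCoeffs P) (hPT : ∀ z, (P z).natDegree ≤ #T) {Ω : Set ℂ}
    (hΩ : IsOpen Ω) {F w : ι → ℂ → ℂ} (hF : ∀ i ∈ T, ∀ z ∈ Ω, HasDerivAt (F i) (w i z) z)
    (hinj : ∀ z ∈ Ω, Set.InjOn (F · z) T) (hPΩ : ∀ z ∈ Ω, P z = ∏ i ∈ T, (X - C (F i z))) :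
    ∃ R : ℂ → ℂ[X], MeromorphicCoeffs R ∧ (∀ z, (R z).Monic ∧ (R z).natDegree = #T) ∧
      ∀ z ∈ Ω, R z = ∏ i ∈ T, (X - C (w i z)) := by
  obtain ⟨D, hD, hDT, hDP⟩ := hP.exists_coeff_eq_deriv hPT
  have hPD : ∀ z ∈ Ω, ∀ n, HasDerivAt (fun y => (P y).coeff n) ((D z).coeff n) z := by
    intro z hz n
    have hFan : ∀ i ∈ T, AnalyticAt ℂ (F i) z := fun i hi => DifferentiableOn.analyticAt
      (fun y hy => (hF i hi y hy).differentiableAt.differentiableWithinAt) (hΩ.mem_nhds hz)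
    have hPΩ' : (fun y => (∏ i ∈ T, (X - C (F i y))).coeff n) =ᶠ[𝓝 z]
        fun y => (P y).coeff n := by
      filter_upwards [hΩ.mem_nhds hz] with y hy
      rw [hPΩ y hy]
    rw [hDP]
    exact ((analyticAt_coeff_prod_X_sub_C T hFan n).congr hPΩ').differentiableAt.hasDerivAt
  have hvalues : ∀ x, ∃ f : ℂ → ℂ, Meromorphic f ∧
      ∀ z ∈ Ω, (∏ i ∈ T, (X - C (w i z))).eval x = f z := by
    refine fun x => ⟨fun z => (P z).resultant (C x * (P z).derivative + D z) #T #T /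
      (P z).resultant (P z).derivative #T #T,
      (hP.resultant ((hP.derivative.C_mul x).add hD) _ _).fun_div
        (hP.resultant hP.derivative _ _), fun z hz => ?_⟩
    have hw : ∀ i ∈ T, (P z).derivative.eval (F i z) * w i z + (D z).eval (F i z) = 0 :=
      fun i hi => eval_derivative_mul_add_eval_eq_zero hPT (hDT z) (hPD z hz) (hF i hi z hz) <| by
        filter_upwards [hΩ.mem_nhds hz] with y hy
        rw [hPΩ y hy, eval_prod]
        exact prod_eq_zero hi (by simp)
    dsimp only
    rw [hPΩ z hz] at hw ⊢
    rw [resultant_prod_X_sub_C_C_mul_derivative_add T (hDT z) hw x,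
      mul_div_cancel_left₀ _ (resultant_prod_X_sub_C_derivative_ne_zero T (hinj z hz)), eval_prod]
    simp
  obtain ⟨R, hR, hRΩ⟩ := exists_meromorphicCoeffs_eqOn_of_eval (N := #T) (by simp) hvalues
  obtain ⟨R', hR', hR'm, hR'R⟩ := hR.exists_monic_eqOn (q := #T) fun z hz => by
    rw [hRΩ z hz]
    exact ⟨monic_prod_of_monic _ _ fun i _ => monic_X_sub_C _,
      natDegree_finsetProd_X_sub_C_eq_card _ _⟩
  exact ⟨R', hR', hR'm, fun z hz => (hR'R z hz).trans (hRΩ z hz)⟩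

theorem exists_eventually_eq_prod_X_sub_C_of_mul_eq {ι : Type*} [Fintype ι] [DecidableEq ι]
    {P Q : ℂ → ℂ[X]} (hP : MeromorphicCoeffs P) (hPm : ∀ z, (P z).Monic)
    (hPN : ∀ z, (P z).natDegree ≤ Fintype.card ι) {F : ι → ℂ → ℂ} {z₀ : ℂ}
    (hF : ∀ i, AnalyticAt ℂ (F i) z₀)
    (hPQ : ∀ᶠ z in 𝓝[≠] z₀, P z * Q z = ∏ i, (X - C (F i z))) :
    ∃ T : Finset ι, ∀ᶠ z in 𝓝[≠] z₀,
      P z = ∏ i ∈ T, (X - C (F i z)) ∧ Q z = ∏ i ∈ Tᶜ, (X - C (F i z)) := by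
  have hsub : ∃ᶠ z in 𝓝[≠] z₀, ∃ T : Finset ι, P z = ∏ i ∈ T, (X - C (F i z)) :=
    hPQ.frequently.mono fun z hz =>
      let ⟨T, _, hT⟩ := exists_subset_eq_prod_X_sub_C_of_dvd univ (hPm z) (Dvd.intro _ hz)
      ⟨T, hT⟩
  obtain ⟨T, hT⟩ := frequently_exists.1 hsub
  have hPT := eventually_eq_of_frequently_eq_of_meromorphicAt (fun n => (hP n).meromorphicAt)
    (fun n => (analyticAt_coeff_prod_X_sub_C T (fun i _ => hF i) n).meromorphicAt) hPN
    (fun z => (natDegree_finsetProd_X_sub_C_eq_card T _).trans_le (card_le_univ T)) hT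
  refine ⟨T, ?_⟩
  filter_upwards [hPT, hPQ] with z hzT hzPQ
  refine ⟨hzT, mul_left_cancel₀ (hPm z).ne_zero ?_⟩
  rw [hzPQ, hzT, prod_mul_prod_compl]

theorem eventually_injective_of_injective_deriv {ι : Type*} [Finite ι] {F : ι → ℂ → ℂ}
    {z₀ : ℂ} (hF : ∀ i, AnalyticAt ℂ (F i) z₀)
    (hinj : Function.Injective fun i => deriv (F i) z₀) :
    ∀ᶠ z in 𝓝[≠] z₀, Function.Injective fun i => F i z := by
  have hne : ∀ i j, ∀ᶠ z in 𝓝[≠] z₀, F i z = F j z → i = j := by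
    intro i j
    by_cases hij : i = j
    · exact Eventually.of_forall fun _ _ => hij
    rcases ((hF i).sub (hF j)).eventually_eq_zero_or_eventually_ne_zero with h | h
    · refine absurd (hinj ?_) hij
      have h' : (fun y => F i y - F j y) =ᶠ[𝓝 z₀] fun _ => 0 := h
      have := h'.deriv_eq.trans (deriv_const z₀ (0 : ℂ))
      rwa [deriv_fun_sub (hF i).differentiableAt (hF j).differentiableAt, sub_eq_zero] at this
    · exact h.mono fun z hz hFz => absurd (sub_eq_zero.2 hFz) hz
  filter_upwards [eventually_all.2 fun i => eventually_all.2 (hne i)] with z hz i j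
  exact hz i j

theorem exists_isOpen_subset_eqOn_prod_X_sub_C {ι : Type*} [Fintype ι] [DecidableEq ι]
    {P Q : ℂ → ℂ[X]} (hP : MeromorphicCoeffs P) (hPm : ∀ z, (P z).Monic)
    (hPN : ∀ z, (P z).natDegree ≤ Fintype.card ι) {U : Set ℂ} (hU : IsOpen U)
    {F w : ι → ℂ → ℂ} (hF : ∀ i, ∀ z ∈ U, HasDerivAt (F i) (w i z) z) {z₀ : ℂ}
    (hz₀ : z₀ ∈ U) (hw : Function.Injective fun i => w i z₀)
    (hPQ : ∀ᶠ z in codiscrete ℂ, z ∈ U → P z * Q z = ∏ i, (X - C (F i z))) :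
    ∃ T : Finset ι, ∃ Ω ⊆ U, IsOpen Ω ∧ Ω.Nonempty ∧ ∀ z ∈ Ω,
      P z = ∏ i ∈ T, (X - C (F i z)) ∧ Q z = ∏ i ∈ Tᶜ, (X - C (F i z)) ∧
        Function.Injective fun i => F i z := by
  have hUz₀ : ∀ᶠ z in 𝓝[≠] z₀, z ∈ U := nhdsWithin_le_nhds (hU.mem_nhds hz₀)
  have hFan : ∀ i, AnalyticAt ℂ (F i) z₀ := fun i => DifferentiableOn.analyticAt
    (fun z hz => (hF i z hz).differentiableAt.differentiableWithinAt) (hU.mem_nhds hz₀)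
  have hPQ₀ : ∀ᶠ z in 𝓝[≠] z₀, P z * Q z = ∏ i, (X - C (F i z)) := by
    filter_upwards [nhdsNE_le_codiscrete z₀ hPQ, hUz₀] with z hzPQ hzU using hzPQ hzU
  obtain ⟨T, hT⟩ := exists_eventually_eq_prod_X_sub_C_of_mul_eq hP hPm hPN hFan hPQ₀
  have hFinj := eventually_injective_of_injective_deriv hFan
    (by simpa only [fun i => (hF i z₀ hz₀).deriv] using hw)
  obtain ⟨Ω, hΩ, hΩne, hΩT⟩ := (hUz₀.and (hT.and hFinj)).exists_isOpen_nonempty_of_nhdsNE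
  exact ⟨T, Ω, fun z hz => (hΩT z hz).1, hΩ, hΩne, fun z hz =>
    ⟨(hΩT z hz).2.1.1, (hΩT z hz).2.1.2, (hΩT z hz).2.2⟩⟩

theorem integral_of_irreducible_is_irreducible_general (k : ℕ)
    (A : Fin k → ℂ → ℂ) (hA : ∀ j, MeromorphicOn (A j) Set.univ)
    (hirr : ¬ AlgFactorable k A)
    (U : Set ℂ) (hU : IsOpen U) (hUconn : IsConnected U)
    (w F : Fin k → ℂ → ℂ)
    (hroots : ∀ z ∈ U, Function.Injective (fun j => w j z) ∧
      ∀ x : ℂ, x ^ k + ∑ j : Fin k, A j z * x ^ (k - 1 - (j : ℕ)) =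
        ∏ j : Fin k, (x - w j z))
    (hF : ∀ j, ∀ z ∈ U, HasDerivAt (F j) (w j z) z)
    (B : Fin k → ℂ → ℂ)
    (hBroots : ∀ z ∈ U, ∀ M : ℂ,
      M ^ k + ∑ j : Fin k, B j z * M ^ (k - 1 - (j : ℕ)) =
        ∏ j : Fin k, (M - F j z)) :
    ¬ AlgFactorable k B := by
  rw [algFactorable_iff]
  rintro ⟨q, hq, hqk, P, Q, hP, hQ, hPm, hQm, hPQ⟩
  obtain ⟨z₀, hz₀⟩ := hUconn.nonempty
  obtain ⟨T, Ω, hΩU, hΩ, ⟨z₁, hz₁⟩, hΩT⟩ := exists_isOpen_subset_eqOn_prod_X_sub_C hP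
    (fun z => (hPm z).1) (fun z => by simpa [(hPm z).2] using hqk.le) hU hF hz₀
    (hroots z₀ hz₀).1
    (hPQ.mono fun z hz hzU => by rw [← hz, monicOfCoeffs_eq_prod_X_sub_C (hBroots z hzU)])
  have hTq : #T = q := by
    rw [← (hPm z₁).2, (hΩT z₁ hz₁).1, natDegree_finsetProd_X_sub_C_eq_card]
  have hTcq : #Tᶜ = k - q := by rw [card_compl, hTq, Fintype.card_fin]
  obtain ⟨R, hR, hRm, hRΩ⟩ := exists_meromorphicCoeffs_eqOn_prod_X_sub_C_of_hasDerivAt T hP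
    (fun z => (hPm z).2.trans_le hTq.ge) hΩ (fun i _ z hz => hF i z (hΩU hz))
    (fun z hz => (hΩT z hz).2.2.injOn) fun z hz => (hΩT z hz).1
  obtain ⟨S, hS, hSm, hSΩ⟩ := exists_meromorphicCoeffs_eqOn_prod_X_sub_C_of_hasDerivAt Tᶜ hQ
    (fun z => (hQm z).2.trans_le hTcq.ge) hΩ (fun i _ z hz => hF i z (hΩU hz))
    (fun z hz => (hΩT z hz).2.2.injOn) fun z hz => (hΩT z hz).2.1
  refine hirr (algFactorable_iff.2 ⟨q, hq, hqk, R, S, hR, hS, hTq ▸ hRm, hTcq ▸ hSm, ?_⟩)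
  refine (meromorphicCoeffs_monicOfCoeffs fun j => meromorphicOn_univ.1 (hA j))
    |>.eventuallyEq_codiscrete (hR.mul hS) (N := k) (fun z => (natDegree_monicOfCoeffs _).le)
      (fun z => ?_) hΩ ⟨z₁, hz₁⟩ fun z hz => ?_
  · rw [(hRm z).1.natDegree_mul (hSm z).1, (hRm z).2, (hSm z).2, hTq, hTcq]
    omega
  rw [hRΩ z hz, hSΩ z hz, prod_mul_prod_compl,
    monicOfCoeffs_eq_prod_X_sub_C (hroots z (hΩU hz)).2]

/-- The integral of an irreducible algebroidal function is irreducible: if on a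
domain `U` the roots of `M^k + B₁(z)M^{k-1} + ⋯ + B_k(z)` are holomorphic
functions `F₁, …, F_k` whose derivatives are the `k` distinct branches
`w₁, …, w_k` of the irreducible equation `W^k + A₁(z)W^{k-1} + ⋯ + A_k(z) = 0`,
then the `B`-polynomial cannot factor into monic meromorphic factors of positive
degree; i.e. it is irreducible. -/
theorem integral_of_irreducible_is_irreducible (k : ℕ) (hk : 1 ≤ k)
    (A : Fin k → ℂ → ℂ) (hA : ∀ j, MeromorphicOn (A j) Set.univ)
    (hirr : ¬ AlgFactorable k A)
    (U : Set ℂ) (hU : IsOpen U) (hUconn : IsConnected U)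
    (w F : Fin k → ℂ → ℂ)
    (hroots : ∀ z ∈ U, Function.Injective (fun j => w j z) ∧
      ∀ x : ℂ, x ^ k + ∑ j : Fin k, A j z * x ^ (k - 1 - (j : ℕ)) =
        ∏ j : Fin k, (x - w j z))
    (hF : ∀ j, ∀ z ∈ U, HasDerivAt (F j) (w j z) z)
    (B : Fin k → ℂ → ℂ) (hB : ∀ j, MeromorphicOn (B j) Set.univ)
    (hBroots : ∀ z ∈ U, ∀ M : ℂ,
      M ^ k + ∑ j : Fin k, B j z * M ^ (k - 1 - (j : ℕ)) =
        ∏ j : Fin k, (M - F j z)) :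
    ¬ AlgFactorable k B :=
  integral_of_irreducible_is_irreducible_general k A hA hirr U hU hUconn w F hroots hF B hBroots
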